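/- arXiv:1904.09542 — 2 statements merged into one kernel-verified Lean document; each statement's English description precedes it below -/
import Mathlib

section
/- Let X be a real vector space, n ≥ 2, and let (·,·|·,...,·) be a weak n-inner product on X. Then for all x, y, x₂, ..., xₙ ∈ X the Schwarz type inequality holds: |(x,y|xₙ,...,x₂)| ≤ √((x,x|xₙ,...,x₂)) · √((y,y|xₙ,...,x₂)). -/
/-- A weak `n`-inner product on a real vector space `X`, where `n = m + 2 ≥ 2`.
The value `f x y v` represents `(x, y | xₙ, …, x₂)`, where the tuple
`v : Fin (m+1) → X` lists the conditioning vectors `xₙ, x_{n-1}, …, x₂`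
(so `v 0 = xₙ`). -/
structure WeakNInner (X : Type*) [AddCommGroup X] [Module ℝ X] (m : ℕ) where
  f : X → X → (Fin (m + 1) → X) → ℝ
  /-- P1 (positivity) -/
  nonneg : ∀ (x : X) (v : Fin (m + 1) → X), 0 ≤ f x x v
  /-- P1 (definiteness): `(x,x|xₙ,…,x₂) = 0` iff `x, x₂, …, xₙ` are linearly dependent. -/
  eq_zero_iff : ∀ (x : X) (v : Fin (m + 1) → X),
    f x x v = 0 ↔ ¬ LinearIndependent ℝ (Fin.cons x v : Fin (m + 2) → X)
  /-- P2 (interchangeability): `(x,x|xₙ,x_{n-1},…,x₂) = (xₙ,xₙ|x,x_{n-1},…,x₂)`. -/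
  interchange : ∀ (x : X) (v : Fin (m + 1) → X),
    f x x v = f (v 0) (v 0) (Function.update v 0 x)
  /-- P3 (symmetry) -/
  symm : ∀ (x y : X) (v : Fin (m + 1) → X), f x y v = f y x v
  /-- P4 (homogeneity) -/
  smul_left : ∀ (α : ℝ) (x y : X) (v : Fin (m + 1) → X),
    f (α • x) y v = α * f x y v
  /-- P5 (additivity) -/
  add_left : ∀ (x x' y : X) (v : Fin (m + 1) → X),
    f (x + x') y v = f x y v + f x' y v

/-! For fixed conditioning vectors `v`, the map `(x, y) ↦ (x, y | v)` is a positive semidefinite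
symmetric bilinear form on `X`, so this is Cauchy–Schwarz for such forms. -/

namespace WeakNInner

variable {X : Type*} [AddCommGroup X] [Module ℝ X] {m : ℕ} (P : WeakNInner X m)

theorem add_right (x y y' : X) (v : Fin (m + 1) → X) :
    P.f x (y + y') v = P.f x y v + P.f x y' v := by
  rw [P.symm, P.add_left, P.symm y, P.symm y']

theorem smul_right (α : ℝ) (x y : X) (v : Fin (m + 1) → X) :
    P.f x (α • y) v = α * P.f x y v := by
  rw [P.symm, P.smul_left, P.symm]

def bilinForm (v : Fin (m + 1) → X) : LinearMap.BilinForm ℝ X :=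
  LinearMap.mk₂ ℝ (fun x y ↦ P.f x y v) (P.add_left · · · v) (P.smul_left · · · v)
    (P.add_right · · · v) (P.smul_right · · · v)

theorem isSymm_bilinForm (v : Fin (m + 1) → X) : LinearMap.IsSymm (P.bilinForm v) :=
  ⟨fun x y ↦ P.symm x y v⟩

theorem sq_le_mul (x y : X) (v : Fin (m + 1) → X) :
    P.f x y v ^ 2 ≤ P.f x x v * P.f y y v :=
  (P.bilinForm v).apply_sq_le_of_symm (P.nonneg · v) (P.isSymm_bilinForm v) x y

end WeakNInner

/-- Schwarz type inequality for a weak `n`-inner product: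
`|(x,y|xₙ,…,x₂)| ≤ √((x,x|xₙ,…,x₂)) · √((y,y|xₙ,…,x₂))`. -/
theorem weakNInner_schwarz {X : Type*} [AddCommGroup X] [Module ℝ X]
    {m : ℕ} (P : WeakNInner X m) (x y : X) (v : Fin (m + 1) → X) :
    |P.f x y v| ≤ Real.sqrt (P.f x x v) * Real.sqrt (P.f y y v) := by
  rw [← Real.sqrt_mul (P.nonneg x v)]
  exact Real.abs_le_sqrt (P.sq_le_mul x y v)
end

section
/- Let X be a real inner product space, let e, x, y ∈ X be linearly independent, and suppose w = a·x + b·y + c·e for real numbers a, b, c. Then (x,x|y,e)_* > 0 and a = (w,x|y,e)_* / (x,x|y,e)_* and b = (w,y|x,e)_* / (x,x|y,e)_*, where (·,·|·,·)_* is the 3-iterated 2-inner product. -/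
/-!
For a fixed list `l`, `B u v := iter2 u v l` is a symmetric bilinear form vanishing on the span
of `l`, and one recursion step is a Schur complement: with `π u = B z z • u - B u z • z`
(the component of `u` orthogonal to `z` for `B`, scaled by `B z z`) one has
`B (π u) (π u) = B z z * iter2 u u (z :: l)`. Hence positivity of `B` off the span of a linearly
independent list propagates along the list by induction. Finally `(w,x|y,e)_*` and `(w,y|x,e)_*`
only see the `x`- and `y`-components of `w`, and `(y,y|x,e)_* = (x,x|y,e)_*`.
-/

open scoped InnerProductSpace

/-- The `n`-iterated 2-inner product `(x, y | xₙ, …, x₂)_*` on a real inner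
product space, where the list `l = [xₙ, x_{n-1}, …, x₂]` collects the
conditioning vectors (so `n = l.length + 1`).  For the empty list it is the
inner product `⟪x, y⟫` (the convention for `n = 1`), and
`(x, y | xₙ, …, x₂)_* = (x,y|x_{n-1},…,x₂)_* (xₙ,xₙ|x_{n-1},…,x₂)_*
  - (x,xₙ|x_{n-1},…,x₂)_* (xₙ,y|x_{n-1},…,x₂)_*`.
In particular `(x,y|z)_* = ⟪x,y⟫⟪z,z⟫ - ⟪x,z⟫⟪z,y⟫`. -/
noncomputable def iter2 {X : Type*} [NormedAddCommGroup X] [InnerProductSpace ℝ X] :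
    X → X → List X → ℝ
  | x, y, [] => ⟪x, y⟫_ℝ
  | x, y, (z :: l) => iter2 x y l * iter2 z z l - iter2 x z l * iter2 z y l

section Iter2

open Submodule

variable {X : Type*} [NormedAddCommGroup X] [InnerProductSpace ℝ X]

theorem iter2_comm (u v : X) (l : List X) : iter2 u v l = iter2 v u l := by
  induction l generalizing u v with
  | nil => exact real_inner_comm v u
  | cons z l ih => simp only [iter2, ih u, ih z v]; ring

theorem iter2_add_left (u v w : X) (l : List X) :
    iter2 (u + v) w l = iter2 u w l + iter2 v w l := by
  induction l generalizing w with
  | nil => exact inner_add_left u v w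
  | cons z l ih => simp only [iter2, ih]; ring

theorem iter2_smul_left (r : ℝ) (u w : X) (l : List X) :
    iter2 (r • u) w l = r * iter2 u w l := by
  induction l generalizing w with
  | nil => exact real_inner_smul_left u w r
  | cons z l ih => simp only [iter2, ih]; ring

theorem iter2_sub_left (u v w : X) (l : List X) :
    iter2 (u - v) w l = iter2 u w l - iter2 v w l := by
  rw [sub_eq_add_neg, ← neg_one_smul ℝ v, iter2_add_left, iter2_smul_left]; ring

theorem iter2_sub_right (u v w : X) (l : List X) :
    iter2 w (u - v) l = iter2 w u l - iter2 w v l := by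
  simp only [iter2_comm w, iter2_sub_left]

theorem iter2_smul_right (r : ℝ) (u w : X) (l : List X) :
    iter2 w (r • u) l = r * iter2 w u l := by
  simp only [iter2_comm w, iter2_smul_left]

theorem iter2_eq_zero_of_mem_span {u : X} {l : List X} (hu : u ∈ span ℝ {z | z ∈ l}) (v : X) :
    iter2 u v l = 0 := by
  induction l generalizing u v with
  | nil =>
    simp only [List.not_mem_nil, Set.ofPred_false, span_empty, mem_bot] at hu
    simp [iter2, hu]
  | cons z l ih =>
    have hspan : {w | w ∈ z :: l} = insert z {w | w ∈ l} := by ext; simp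
    rw [hspan, mem_span_insert] at hu
    obtain ⟨a, t, ht, rfl⟩ := hu
    simp only [iter2, iter2_add_left, iter2_smul_left, ih ht]
    ring

theorem iter2_eq_zero_of_mem {u : X} {l : List X} (hu : u ∈ l) (v : X) : iter2 u v l = 0 :=
  iter2_eq_zero_of_mem_span (subset_span hu) v

theorem iter2_self_cons_comm (u z : X) (l : List X) :
    iter2 u u (z :: l) = iter2 z z (u :: l) := by
  simp only [iter2, iter2_comm z u]; ring

theorem iter2_proj_self (u z : X) (l : List X) :
    iter2 (iter2 z z l • u - iter2 u z l • z) (iter2 z z l • u - iter2 u z l • z) l =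
      iter2 z z l * iter2 u u (z :: l) := by
  simp only [iter2, iter2_sub_left, iter2_sub_right, iter2_smul_left, iter2_smul_right,
    iter2_comm z u]
  ring

theorem iter2_self_pos {n : ℕ} {v : Fin n → X} (hv : LinearIndependent ℝ v) {u : X}
    (hu : u ∉ span ℝ (Set.range v)) : 0 < iter2 u u (List.ofFn v) := by
  induction n generalizing u with
  | zero =>
    rw [Set.range_eq_empty, span_empty, mem_bot] at hu
    exact real_inner_self_pos.mpr hu
  | succ n ih =>
    induction v using Fin.consCases with | cons z v => ?_
    obtain ⟨hv, hz⟩ := linearIndependent_finCons.mp hv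
    rw [Fin.range_cons, mem_span_insert'] at hu
    rw [List.ofFn_cons]
    set l := List.ofFn v
    have hzz : 0 < iter2 z z l := ih hv hz
    have hproj : iter2 z z l • u - iter2 u z l • z ∉ span ℝ (Set.range v) := by
      intro h
      apply hu ⟨-(iter2 u z l / iter2 z z l), ?_⟩
      convert smul_mem _ (iter2 z z l)⁻¹ h using 1
      rw [smul_sub, smul_smul, smul_smul, inv_mul_cancel₀ hzz.ne', one_smul, neg_smul,
        ← sub_eq_add_neg, div_eq_inv_mul]
    have hprod := ih hv hproj
    rw [iter2_proj_self] at hprod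
    exact pos_of_mul_pos_right hprod hzz.le

end Iter2

/-- If `e, x, y` are linearly independent vectors in a real inner product space
and `w = a x + b y + c e`, then `(x,x|y,e)_* > 0` and the coefficients `a, b`
are given by `a = (w,x|y,e)_* / (x,x|y,e)_*` and
`b = (w,y|x,e)_* / (x,x|y,e)_*`, where `(·,·|·,·)_*` is the 3-iterated
2-inner product. -/
theorem regression_coefficients {X : Type*} [NormedAddCommGroup X] [InnerProductSpace ℝ X]
    (x y e w : X) (a b c : ℝ)
    (hli : LinearIndependent ℝ ![e, x, y])
    (hw : w = a • x + b • y + c • e) :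
    0 < iter2 x x [y, e] ∧
      a = iter2 w x [y, e] / iter2 x x [y, e] ∧
      b = iter2 w y [x, e] / iter2 x x [y, e] := by
  have hxye : LinearIndependent ℝ (Fin.cons x ![y, e]) := by
    convert hli.comp ![1, 2, 0] (by decide) using 1
    ext i; fin_cases i <;> rfl
  obtain ⟨hye, hx⟩ := linearIndependent_finCons.mp hxye
  have hpos : 0 < iter2 x x [y, e] := iter2_self_pos hye hx
  have hwx : iter2 w x [y, e] = a * iter2 x x [y, e] := by
    simp only [hw, iter2_add_left, iter2_smul_left,
      iter2_eq_zero_of_mem (u := y) (l := [y, e]) (by simp),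
      iter2_eq_zero_of_mem (u := e) (l := [y, e]) (by simp)]
    ring
  have hwy : iter2 w y [x, e] = b * iter2 x x [y, e] := by
    simp only [hw, iter2_add_left, iter2_smul_left,
      iter2_eq_zero_of_mem (u := x) (l := [x, e]) (by simp),
      iter2_eq_zero_of_mem (u := e) (l := [x, e]) (by simp), iter2_self_cons_comm y x]
    ring
  exact ⟨hpos, eq_div_of_mul_eq hpos.ne' hwx.symm, eq_div_of_mul_eq hpos.ne' hwy.symm⟩
end
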